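/- Let n ≥ 1 and let μ_n be the product of n copies of the uniform distribution on [0, 2π). Then the expected GEPP ℓ∞ growth factor of a Haar-butterfly matrix equals N^γ for γ = log₂(1 + (log 4)/π): ∫ ∏_{j=1}^n (1 + min(|tan θ_j|, 1/|tan θ_j|)) dμ_n(θ) = (1 + (2 ln 2)/π)ⁿ = N^{log₂(1 + (2 ln 2)/π)}, where N = 2ⁿ. -/

import Mathlib

/-!
On the period `[0, π/2)` of `x ↦ min(|tan x|, 1/|tan x|)`, the reflection `x ↦ π/2 - x` exchanges
`tan` and `cot`, so the integral over a period is `2 ∫₀^{π/4} tan = log 2`. Averaging over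
`[0, 2π)` gives `𝔼[1 + min(|tan θ|, 1/|tan θ|)] = 1 + 2 log 2 / π`, and independence of the
`n` angles turns the expected product into the `n`-th power.
-/

open MeasureTheory Real

/-- The uniform probability distribution on `[0, 2π)`: `(2π)⁻¹·λ` restricted to `[0, 2π)`. -/
noncomputable def unif : Measure ℝ :=
  (ENNReal.ofReal (2 * π))⁻¹ • volume.restrict (Set.Ico 0 (2 * π))

/-- The product `μ_n` of `n` independent copies of the uniform distribution on `[0, 2π)`,
the distribution of the angles of a Haar-butterfly matrix `B(θ) = R(θ_1) ⊗ ⋯ ⊗ R(θ_n)`. -/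
noncomputable def μpi (n : ℕ) : Measure (Fin n → ℝ) :=
  Measure.pi fun _ => unif

open Set

noncomputable def minAbsInv (t : ℝ) : ℝ := min |t| |t|⁻¹

lemma minAbsInv_nonneg (t : ℝ) : 0 ≤ minAbsInv t :=
  le_min (abs_nonneg t) (inv_nonneg.2 (abs_nonneg t))

lemma minAbsInv_le_one (t : ℝ) : minAbsInv t ≤ 1 := by
  rcases le_or_gt |t| 1 with h | h
  · exact (min_le_left _ _).trans h
  · exact (min_le_right _ _).trans (inv_le_one_of_one_le₀ h.le)

lemma norm_minAbsInv_le_one (t : ℝ) : ‖minAbsInv t‖ ≤ 1 := by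
  rw [norm_of_nonneg (minAbsInv_nonneg t)]
  exact minAbsInv_le_one t

@[simp]
lemma minAbsInv_inv (t : ℝ) : minAbsInv t⁻¹ = minAbsInv t := by
  simp only [minAbsInv, abs_inv, inv_inv, min_comm]

@[simp]
lemma minAbsInv_neg (t : ℝ) : minAbsInv (-t) = minAbsInv t := by
  simp only [minAbsInv, abs_neg]

lemma minAbsInv_of_nonneg_of_le_one {t : ℝ} (h₀ : 0 ≤ t) (h₁ : t ≤ 1) : minAbsInv t = t := by
  rw [minAbsInv, abs_of_nonneg h₀, min_eq_left]
  rcases h₀.eq_or_lt with rfl | hpos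
  · simp
  · exact h₁.trans ((one_le_inv₀ hpos).2 h₁)

lemma measurable_minAbsInv : Measurable minAbsInv :=
  measurable_id.abs.min measurable_id.abs.inv

lemma Real.measurable_tan : Measurable tan := by
  rw [show tan = fun x => sin x / cos x from funext tan_eq_sin_div_cos]
  exact measurable_sin.div measurable_cos

lemma minAbsInv_tan_periodic : Function.Periodic (fun x => minAbsInv (tan x)) (π / 2) := by
  intro x
  have : x + π / 2 = π / 2 - -x := by ring
  simp only [this, tan_pi_div_two_sub, tan_neg, inv_neg, minAbsInv_neg, minAbsInv_inv]

lemma minAbsInv_tan_pi_div_two_sub (x : ℝ) : minAbsInv (tan (π / 2 - x)) = minAbsInv (tan x) := by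
  rw [tan_pi_div_two_sub, minAbsInv_inv]

lemma intervalIntegrable_minAbsInv_tan (a b : ℝ) :
    IntervalIntegrable (fun x => minAbsInv (tan x)) volume a b :=
  (intervalIntegrable_const (c := (1 : ℝ))).mono_fun
    (measurable_minAbsInv.comp measurable_tan).aestronglyMeasurable
    (ae_of_all _ fun x => by simpa using norm_minAbsInv_le_one (tan x))

lemma Real.integral_tan_of_mem_Ioo {a b : ℝ} (ha : a ∈ Ioo (-(π / 2)) (π / 2))
    (hb : b ∈ Ioo (-(π / 2)) (π / 2)) :
    ∫ x in a..b, tan x = log (cos a) - log (cos b) := by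
  have hcos : ∀ x ∈ uIcc a b, cos x ≠ 0 := fun x hx =>
    (cos_pos_of_mem_Ioo (ordConnected_Ioo.uIcc_subset ha hb hx)).ne'
  have hderiv : ∀ x ∈ uIcc a b, HasDerivAt (fun y => -log (cos y)) (tan x) x := fun x hx => by
    refine ((hasDerivAt_cos x).log (hcos x hx)).neg.congr_deriv ?_
    rw [tan_eq_sin_div_cos]
    ring
  rw [intervalIntegral.integral_eq_sub_of_hasDerivAt hderiv
    (continuousOn_tan.mono hcos).intervalIntegrable]
  ring

lemma Real.tan_le_one_of_le_pi_div_four {x : ℝ} (h₀ : 0 ≤ x) (h₁ : x ≤ π / 4) : tan x ≤ 1 := by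
  have hpi := pi_pos
  rw [← tan_pi_div_four]
  exact strictMonoOn_tan.monotoneOn ⟨by linarith, by linarith⟩ ⟨by linarith, by linarith⟩ h₁

lemma integral_minAbsInv_tan_zero_pi_div_four :
    ∫ x in 0..π / 4, minAbsInv (tan x) = log 2 / 2 := by
  have hpi := pi_pos
  have hquarter : (0 : ℝ) ≤ π / 4 := by positivity
  have heq : EqOn (fun x => minAbsInv (tan x)) tan (uIcc 0 (π / 4)) := fun x hx => by
    rw [uIcc_of_le hquarter] at hx
    exact minAbsInv_of_nonneg_of_le_one
      (tan_nonneg_of_nonneg_of_le_pi_div_two hx.1 (by linarith [hx.2]))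
      (tan_le_one_of_le_pi_div_four hx.1 hx.2)
  rw [intervalIntegral.integral_congr heq,
    integral_tan_of_mem_Ioo ⟨by linarith, by linarith⟩ ⟨by linarith, by linarith⟩,
    cos_zero, cos_pi_div_four, log_one, log_div (by positivity) two_ne_zero,
    log_sqrt zero_le_two]
  ring

lemma integral_minAbsInv_tan_zero_pi_div_two :
    ∫ x in 0..π / 2, minAbsInv (tan x) = log 2 := by
  have hreflect : ∫ x in π / 4..π / 2, minAbsInv (tan x) = log 2 / 2 := by
    have h := intervalIntegral.integral_comp_sub_left (fun x => minAbsInv (tan x)) (a := 0)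
      (b := π / 4) (π / 2)
    simp only [minAbsInv_tan_pi_div_two_sub, integral_minAbsInv_tan_zero_pi_div_four,
      sub_zero] at h
    rwa [show π / 2 - π / 4 = π / 4 by ring, eq_comm] at h
  rw [← intervalIntegral.integral_add_adjacent_intervals (intervalIntegrable_minAbsInv_tan _ _)
    (intervalIntegrable_minAbsInv_tan _ _), integral_minAbsInv_tan_zero_pi_div_four, hreflect]
  ring

lemma integral_minAbsInv_tan_zero_two_pi :
    ∫ x in 0..2 * π, minAbsInv (tan x) = 4 * log 2 := by
  have h := minAbsInv_tan_periodic.intervalIntegral_add_zsmul_eq 4 0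
    intervalIntegrable_minAbsInv_tan
  simp only [zero_add, integral_minAbsInv_tan_zero_pi_div_two, zsmul_eq_mul] at h
  convert h using 2 <;> push_cast <;> ring

instance isProbabilityMeasure_unif : IsProbabilityMeasure unif := by
  constructor
  rw [unif, Measure.smul_apply, Measure.restrict_apply MeasurableSet.univ, univ_inter,
    volume_Ico, sub_zero, smul_eq_mul]
  exact ENNReal.inv_mul_cancel (by simp [pi_pos]) ENNReal.ofReal_ne_top

lemma integral_unif (f : ℝ → ℝ) : ∫ x, f x ∂unif = (2 * π)⁻¹ * ∫ x in 0..2 * π, f x := by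
  rw [unif, integral_smul_measure, ENNReal.toReal_inv, ENNReal.toReal_ofReal two_pi_pos.le,
    integral_Ico_eq_integral_Ioc, ← intervalIntegral.integral_of_le two_pi_pos.le, smul_eq_mul]

lemma integral_one_add_minAbsInv_tan_unif :
    ∫ x, (1 + minAbsInv (tan x)) ∂unif = 1 + 2 * log 2 / π := by
  have hint : Integrable (fun x => minAbsInv (tan x)) unif :=
    .of_bound (measurable_minAbsInv.comp measurable_tan).aestronglyMeasurable 1
      (ae_of_all _ fun x => norm_minAbsInv_le_one (tan x))
  rw [integral_add (integrable_const 1) hint, integral_const, probReal_univ, one_smul,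
    integral_unif, integral_minAbsInv_tan_zero_two_pi]
  field_simp
  ring

lemma pow_eq_rpow_logb {b x : ℝ} (hb : 0 < b) (hb₁ : b ≠ 1) (hx : 0 < x) (n : ℕ) :
    x ^ n = (b ^ n) ^ logb b x := by
  rw [← rpow_natCast b, ← rpow_mul hb.le, mul_comm, rpow_mul hb.le, rpow_logb hb hb₁ hx,
    rpow_natCast]

theorem expected_GEPP_linf_growth_general (n : ℕ) :
    (∫ θ : Fin n → ℝ,
        ∏ j, (1 + min |Real.tan (θ j)| |Real.tan (θ j)|⁻¹) ∂(μpi n)) =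
      (1 + 2 * Real.log 2 / π) ^ n ∧
    ((1 + 2 * Real.log 2 / π : ℝ)) ^ n =
      ((2 : ℝ) ^ n) ^ Real.logb 2 (1 + 2 * Real.log 2 / π) := by
  refine ⟨?_, pow_eq_rpow_logb two_pos (by norm_num) (by positivity) n⟩
  have h := integral_fintype_prod_eq_pow (ι := Fin n) (μ := unif) fun x => 1 + minAbsInv (tan x)
  rwa [integral_one_add_minAbsInv_tan_unif, Fintype.card_fin] at h

/-- The expected GEPP ℓ∞ growth factor of an `N×N` Haar-butterfly matrix (`N = 2ⁿ`) is
`N^γ` for `γ = log₂(1 + (2 ln 2)/π)`: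
`∫ ∏_j (1 + min(|tan θ_j|, 1/|tan θ_j|)) dμ_n(θ) = (1 + (2 ln 2)/π)ⁿ`. -/
theorem expected_GEPP_linf_growth (n : ℕ) (hn : 1 ≤ n) :
    (∫ θ : Fin n → ℝ,
        ∏ j, (1 + min |Real.tan (θ j)| |Real.tan (θ j)|⁻¹) ∂(μpi n)) =
      (1 + 2 * Real.log 2 / π) ^ n ∧
    ((1 + 2 * Real.log 2 / π : ℝ)) ^ n =
      ((2 : ℝ) ^ n) ^ Real.logb 2 (1 + 2 * Real.log 2 / π) :=
  expected_GEPP_linf_growth_general n
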